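/- arXiv:2510.21442 — 6 statements merged into one kernel-verified Lean document; each statement's English description precedes it below -/
import Mathlib

section
/- Let X be a finite set with a total order, and for d in the set of nonnegative vectors on X with total mass at most 1, and α in [0, ‖d‖₁], define the threshold-allocation map Ξ_α which zeroes out all mass strictly above the threshold action ā = max{a : Σ_{a'≥a} d(a') ≥ α, d(a)>0} (or the minimum action if this set is empty), scales the mass at ā by (S_ā(d) − α)/d(ā) where S_ā(d) = Σ_{a'≥ā} d(a'), and leaves mass below ā unchanged. Then for fixed α, the map Ξ_α is nonexpansive in the ℓ¹ norm: ‖Ξ_α(d) − Ξ_α(d')‖₁ ≤ ‖d − d'‖₁ for all d, d' with total mass at least α. -/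
open Finset

variable {A : Type*} [Fintype A] [LinearOrder A] [Nonempty A]

/-- Cumulative mass of `d` from `a` upwards: `S_a(d) = ∑_{a' ≥ a} d a'`. -/
noncomputable def Sge (d : A → ℝ) (a : A) : ℝ :=
  ∑ a' ∈ Finset.univ.filter (fun a' => a ≤ a'), d a'

/-- Candidate threshold actions: those `a` with `S_a(d) ≥ α` and `d a > 0`. -/
noncomputable def thSet (d : A → ℝ) (α : ℝ) : Finset A :=
  Finset.univ.filter (fun a => α ≤ Sge d a ∧ 0 < d a)

/-- Threshold action `ā = Th_α(d)`: the maximum of the candidate set (or the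
minimum element of `A` if the set is empty). -/
noncomputable def Th (d : A → ℝ) (α : ℝ) : A :=
  if h : (thSet d α).Nonempty then (thSet d α).max' h
  else Finset.univ.min' Finset.univ_nonempty

/-- Threshold-allocation map `Ξ_α`: zeroes out all mass strictly above the
threshold action, scales the mass at the threshold to `S_ā(d) − α`, and leaves
mass below the threshold unchanged. `Ξ_0` is the identity. -/
noncomputable def Xi (α : ℝ) (d : A → ℝ) : A → ℝ :=
  if α = 0 then d
  else fun a =>
    if Th d α < a then 0
    else if a = Th d α then Sge d (Th d α) - α
    else d a

/-! ### Auxiliary material for the proof -/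

section Aux

/-- The elementary one-step inequality, assuming `max (q-α) 0 ≤ max (p-α) 0`. -/
private lemma step_half (α p q x y : ℝ) (hx : 0 ≤ x) (hy : 0 ≤ y)
    (hu : max (q - α) 0 ≤ max (p - α) 0) :
    |(max (p + x - α) 0 - max (q + y - α) 0) - (max (p - α) 0 - max (q - α) 0)|
      + |p + x - (q + y)| + |max (p - α) 0 - max (q - α) 0|
    ≤ |x - y| + |p - q| + |max (p + x - α) 0 - max (q + y - α) 0| := by
  set fp := max (p - α) 0 with hfp
  set fq := max (q - α) 0 with hfq
  set fP := max (p + x - α) 0 with hfP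
  set fQ := max (q + y - α) 0 with hfQ
  have hfp0 : 0 ≤ fp := le_max_right _ _
  have hfq0 : 0 ≤ fq := le_max_right _ _
  have hfP0 : 0 ≤ fP := le_max_right _ _
  have hfQ0 : 0 ≤ fQ := le_max_right _ _
  have hpP : fp ≤ fP := max_le_max (by linarith) le_rfl
  have hqQ : fq ≤ fQ := max_le_max (by linarith) le_rfl
  have ha1 : fP - fp ≤ x := by
    have h := abs_max_sub_max_le_abs (p + x - α) (p - α) 0
    rw [← hfP, ← hfp, abs_of_nonneg (by linarith : (0:ℝ) ≤ fP - fp)] at h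
    have e : p + x - α - (p - α) = x := by ring
    rw [e, abs_of_nonneg hx] at h
    exact h
  have hb1 : fQ - fq ≤ y := by
    have h := abs_max_sub_max_le_abs (q + y - α) (q - α) 0
    rw [← hfQ, ← hfq, abs_of_nonneg (by linarith : (0:ℝ) ≤ fQ - fq)] at h
    have e : q + y - α - (q - α) = y := by ring
    rw [e, abs_of_nonneg hy] at h
    exact h
  have hulip : fp - fq ≤ |p - q| := by
    have h := abs_max_sub_max_le_abs (p - α) (q - α) 0
    have e : p - α - (q - α) = p - q := by ring
    rw [← hfp, ← hfq, e] at h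
    calc fp - fq ≤ |fp - fq| := le_abs_self _
      _ ≤ |p - q| := h
  have tri : |p + x - (q + y)| ≤ |p - q| + |x - y| := by
    calc |p + x - (q + y)| = |(p - q) + (x - y)| := by ring_nf
      _ ≤ |p - q| + |x - y| := abs_add_le _ _
  rcases le_total (fQ - fq) (fP - fp) with hab | hab
  · rw [abs_of_nonneg (by linarith : (0:ℝ) ≤ (fP - fQ) - (fp - fq)),
        abs_of_nonneg (by linarith : (0:ℝ) ≤ fp - fq),
        abs_of_nonneg (by linarith : (0:ℝ) ≤ fP - fQ)]
    linarith
  · have hvu : |fP - fQ - (fp - fq)| = (fQ - fq) - (fP - fp) := by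
      rw [abs_of_nonpos (by linarith)]; ring
    have uzero : fp - fq = 0 → |fP - fQ - (fp - fq)| + |p + x - (q + y)| + |fp - fq|
        ≤ |x - y| + |p - q| + |fP - fQ| := by
      intro h0
      rw [h0]
      simp only [sub_zero, abs_zero]
      linarith
    rcases max_cases (q - α) (0:ℝ) with ⟨e2, h2⟩ | ⟨e2, h2⟩ <;> rw [← hfq] at e2
    · -- fq = q − α, 0 ≤ q − α
      have eQ : fQ = q + y - α := by rw [hfQ]; exact max_eq_left (by linarith)
      rcases max_cases (p - α) (0:ℝ) with ⟨e1, h1⟩ | ⟨e1, h1⟩ <;> rw [← hfp] at e1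
      · have eP : fP = p + x - α := by rw [hfP]; exact max_eq_left (by linarith)
        have hD : fP - fQ = p + x - (q + y) := by rw [eP, eQ]; ring
        rw [hvu, hD, abs_of_nonneg (by rw [e1, e2]; linarith : (0:ℝ) ≤ fp - fq)]
        have h3 : y - x ≤ |x - y| := by rw [abs_sub_comm]; exact le_abs_self _
        have h4 : p - q ≤ |p - q| := le_abs_self _
        rw [e1, e2, eP, eQ]
        linarith
      · have hq0 : fq = 0 := le_antisymm (by rw [← e1]; exact hu) hfq0
        exact uzero (by rw [hq0, e1]; ring)
    · -- fq = 0
      rcases max_cases (p + x - α) (0:ℝ) with ⟨e3, h3⟩ | ⟨e3, h3⟩ <;> rw [← hfP] at e3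
      · rcases max_cases (p - α) (0:ℝ) with ⟨e1, h1⟩ | ⟨e1, h1⟩ <;> rw [← hfp] at e1
        · rcases max_cases (q + y - α) (0:ℝ) with ⟨e4, h4⟩ | ⟨e4, h4⟩ <;> rw [← hfQ] at e4
          · have hD : fP - fQ = p + x - (q + y) := by rw [e3, e4]; ring
            have huv : fp - fq = p - α := by rw [e1, e2]; ring
            have hba : (fQ - fq) - (fP - fp) = q + y - α - x := by
              rw [e4, e2, e3, e1]; ring
            rw [hvu, hD, abs_of_nonneg (by rw [huv]; linarith : (0:ℝ) ≤ fp - fq), huv, hba]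
            have h5 : y - x ≤ |x - y| := by rw [abs_sub_comm]; exact le_abs_self _
            have h6 : p - q ≤ |p - q| := le_abs_self _
            linarith
          · have hPp : fP = fp := le_antisymm (by rw [e4, e2] at hab; linarith) hpP
            rw [hvu, hPp, e4, e2]
            simp only [sub_zero, sub_self, abs_zero]
            linarith
        · exact uzero (by rw [e1, e2]; ring)
      · have hp0 : fp = 0 := le_antisymm (by rw [← e3]; exact hpP) hfp0
        exact uzero (by rw [hp0, e2]; ring)

private lemma flip_abs (a b c d : ℝ) : |a - b - (c - d)| = |b - a - (d - c)| := by
  rw [← abs_neg]; congr 1; ring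

/-- The elementary one-step inequality. -/
private lemma step_abs (α p q x y : ℝ) (hx : 0 ≤ x) (hy : 0 ≤ y) :
    |(max (p + x - α) 0 - max (q + y - α) 0) - (max (p - α) 0 - max (q - α) 0)|
      + |p + x - (q + y)| + |max (p - α) 0 - max (q - α) 0|
    ≤ |x - y| + |p - q| + |max (p + x - α) 0 - max (q + y - α) 0| := by
  rcases le_total (max (q - α) 0) (max (p - α) 0) with h | h
  · exact step_half α p q x y hx hy h
  · have hs := step_half α q p y x hy hx h
    have E1 : |(max (q + y - α) 0 - max (p + x - α) 0) - (max (q - α) 0 - max (p - α) 0)|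
        = |(max (p + x - α) 0 - max (q + y - α) 0) - (max (p - α) 0 - max (q - α) 0)| :=
      flip_abs _ _ _ _
    have E2 : |q + y - (p + x)| = |p + x - (q + y)| := abs_sub_comm _ _
    have E3 : |max (q - α) 0 - max (p - α) 0| = |max (p - α) 0 - max (q - α) 0| :=
      abs_sub_comm _ _
    have E4 : |y - x| = |x - y| := abs_sub_comm _ _
    have E5 : |q - p| = |p - q| := abs_sub_comm _ _
    have E6 : |max (q + y - α) 0 - max (p + x - α) 0|
        = |max (p + x - α) 0 - max (q + y - α) 0| := abs_sub_comm _ _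
    rw [E1, E2, E3, E4, E5, E6] at hs
    exact hs

/-- Strict cumulative mass of `d` from above `a`: `∑_{a' > a} d a'`. -/
noncomputable def Sgt (d : A → ℝ) (a : A) : ℝ :=
  ∑ a' ∈ Finset.univ.filter (fun a' => a < a'), d a'

omit [Nonempty A] in
lemma Sge_eq (d : A → ℝ) (a : A) : Sge d a = Sgt d a + d a := by
  unfold Sge Sgt
  have h : Finset.univ.filter (fun a' => a ≤ a') =
      insert a (Finset.univ.filter (fun a' : A => a < a')) := by
    ext c
    simp only [mem_insert, mem_filter, mem_univ, true_and]
    constructor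
    · intro h
      rcases eq_or_lt_of_le h with h | h
      · exact Or.inl h.symm
      · exact Or.inr h
    · rintro (rfl | h)
      · exact le_rfl
      · exact h.le
  rw [h, Finset.sum_insert (by simp)]
  ring

omit [Nonempty A] in
lemma sge_antitone (d : A → ℝ) (hd0 : ∀ a, 0 ≤ d a) : Antitone (Sge d) := by
  intro a b hab
  apply Finset.sum_le_sum_of_subset_of_nonneg
  · intro c hc
    simp only [mem_filter, mem_univ, true_and] at *
    exact hab.trans hc
  · intro _ _ _
    exact hd0 _

lemma sge_bot (d : A → ℝ) :
    Sge d (Finset.univ.min' Finset.univ_nonempty : A) = ∑ a, d a := by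
  unfold Sge
  apply Finset.sum_congr _ (fun _ _ => rfl)
  apply Finset.filter_true_of_mem
  intro c _
  exact Finset.min'_le _ _ (mem_univ _)

omit [Nonempty A] in
lemma sgt_eq (d : A → ℝ) (b : A) :
    Sgt d b = if h : (Finset.univ.filter (fun c => b < c)).Nonempty
      then Sge d ((Finset.univ.filter (fun c => b < c)).min' h) else 0 := by
  split_ifs with h
  · unfold Sgt Sge
    apply Finset.sum_congr _ (fun _ _ => rfl)
    ext c
    simp only [mem_filter, mem_univ, true_and]
    constructor
    · intro hc
      exact Finset.min'_le _ _ (by simp [hc])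
    · intro hc
      exact lt_of_lt_of_le (mem_filter.mp (Finset.min'_mem _ h)).2 hc
  · unfold Sgt
    rw [Finset.not_nonempty_iff_eq_empty] at h
    rw [h, Finset.sum_empty]

lemma th_char (α : ℝ) (hα : 0 < α) (d : A → ℝ) (hd0 : ∀ a, 0 ≤ d a)
    (hdα : α ≤ ∑ a, d a) :
    (∀ a, a ≤ Th d α → α ≤ Sge d a) ∧ (∀ a, Th d α < a → Sge d a < α) := by
  classical
  set Sfin := Finset.univ.filter (fun a : A => α ≤ Sge d a) with hSfin
  have hne : Sfin.Nonempty :=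
    ⟨Finset.univ.min' Finset.univ_nonempty, by
      simp only [hSfin, mem_filter, mem_univ, true_and]
      rw [sge_bot d]; exact hdα⟩
  set b := Sfin.max' hne with hb
  have hbS : α ≤ Sge d b := (mem_filter.mp (Sfin.max'_mem hne)).2
  have hmax : ∀ a, α ≤ Sge d a → a ≤ b := fun a ha =>
    Finset.le_max' _ _ (by simp only [hSfin, mem_filter, mem_univ, true_and]; exact ha)
  have hdb : 0 < d b := by
    by_contra h
    push_neg at h
    have hdb0 : d b = 0 := le_antisymm h (hd0 b)
    have hsgt : α ≤ Sgt d b := by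
      have := Sge_eq d b
      linarith
    rw [sgt_eq] at hsgt
    split_ifs at hsgt with hex
    · have hbc : b < (Finset.univ.filter (fun c => b < c)).min' hex :=
        (mem_filter.mp (Finset.min'_mem _ hex)).2
      exact absurd hbc (not_lt.mpr (hmax _ hsgt))
    · linarith
  have hbth : b ∈ thSet d α := by
    simp only [thSet, mem_filter, mem_univ, true_and]
    exact ⟨hbS, hdb⟩
  have hne' : (thSet d α).Nonempty := ⟨b, hbth⟩
  have hth : Th d α = b := by
    unfold Th
    rw [dif_pos hne']
    apply le_antisymm
    · apply Finset.max'_le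
      intro y hy
      exact hmax y (mem_filter.mp hy).2.1
    · exact Finset.le_max' _ _ hbth
  constructor
  · intro a ha
    rw [hth] at ha
    exact le_trans hbS (sge_antitone d hd0 ha)
  · intro a ha
    rw [hth] at ha
    by_contra h
    push_neg at h
    exact absurd (hmax a h) (not_le.mpr ha)

/-- The key closed-form identity for the threshold-allocation map. -/
lemma xi_formula (α : ℝ) (hα : 0 ≤ α) (d : A → ℝ) (hd0 : ∀ a, 0 ≤ d a)
    (hdα : α ≤ ∑ a, d a) (a : A) :
    Xi α d a = max (Sge d a - α) 0 - max (Sgt d a - α) 0 := by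
  rcases eq_or_lt_of_le hα with h0 | h0
  · rw [← h0]
    unfold Xi
    rw [if_pos rfl]
    have h1 : 0 ≤ Sge d a := Finset.sum_nonneg (fun c _ => hd0 c)
    have h2 : 0 ≤ Sgt d a := Finset.sum_nonneg (fun c _ => hd0 c)
    rw [sub_zero, sub_zero, max_eq_left h1, max_eq_left h2, Sge_eq]
    ring
  · obtain ⟨hle, hgt⟩ := th_char α h0 d hd0 hdα
    have hXi : Xi α d a = if Th d α < a then 0
        else if a = Th d α then Sge d (Th d α) - α else d a := by
      unfold Xi
      rw [if_neg (ne_of_gt h0)]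
    have hsgtth : Sgt d (Th d α) < α := by
      rw [sgt_eq]
      split_ifs with hex
      · exact hgt _ (mem_filter.mp (Finset.min'_mem _ hex)).2
      · exact h0
    rcases lt_trichotomy a (Th d α) with h | h | h
    · rw [hXi, if_neg (not_lt.mpr h.le), if_neg (ne_of_lt h)]
      have h1 : α ≤ Sge d a := hle a h.le
      have h2 : α ≤ Sgt d a := by
        have hsub : Sge d (Th d α) ≤ Sgt d a := by
          apply Finset.sum_le_sum_of_subset_of_nonneg
          · intro c hc
            simp only [mem_filter, mem_univ, true_and] at *
            exact lt_of_lt_of_le h hc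
          · intro _ _ _
            exact hd0 _
        linarith [hle (Th d α) le_rfl]
      rw [max_eq_left (by linarith), max_eq_left (by linarith), Sge_eq]
      ring
    · subst h
      rw [hXi, if_neg (lt_irrefl _), if_pos rfl]
      rw [max_eq_left (by linarith [hle _ le_rfl] : (0:ℝ) ≤ Sge d (Th d α) - α),
          max_eq_right (by linarith : Sgt d (Th d α) - α ≤ 0), sub_zero]
    · rw [hXi, if_pos h]
      have h1 : Sge d a < α := hgt a h
      have h2 : Sgt d a ≤ Sge d a := by
        rw [Sge_eq]
        linarith [hd0 a]
      rw [max_eq_right (by linarith : Sge d a - α ≤ 0),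
          max_eq_right (by linarith : Sgt d a - α ≤ 0)]
      ring

end Aux

/-- For fixed `α`, the threshold-allocation map `Ξ_α` is nonexpansive in ℓ¹ on
`Δ^{≥α}`. -/
theorem xi_nonexpansive (α : ℝ) (hα : 0 ≤ α)
    (d d' : A → ℝ)
    (hd0 : ∀ a, 0 ≤ d a) (hd'0 : ∀ a, 0 ≤ d' a)
    (hd1 : ∑ a, d a ≤ 1) (hd'1 : ∑ a, d' a ≤ 1)
    (hdα : α ≤ ∑ a, d a) (hd'α : α ≤ ∑ a, d' a) :
    ∑ a, |Xi α d a - Xi α d' a| ≤ ∑ a, |d a - d' a| := by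
  classical
  set G : A → ℝ := fun a =>
    |Sge d a - Sge d' a| - |max (Sge d a - α) 0 - max (Sge d' a - α) 0| with hGdef
  set H : A → ℝ := fun a =>
    |Sgt d a - Sgt d' a| - |max (Sgt d a - α) 0 - max (Sgt d' a - α) 0| with hHdef
  have hG0 : ∀ a, 0 ≤ G a := by
    intro a
    rw [hGdef]
    simp only []
    have h := abs_max_sub_max_le_abs (Sge d a - α) (Sge d' a - α) 0
    have e : Sge d a - α - (Sge d' a - α) = Sge d a - Sge d' a := by ring
    rw [e] at h
    linarith
  have hstep : ∀ a, |Xi α d a - Xi α d' a| ≤ |d a - d' a| + H a - G a := by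
    intro a
    have hdiff : Xi α d a - Xi α d' a =
        (max (Sge d a - α) 0 - max (Sge d' a - α) 0)
        - (max (Sgt d a - α) 0 - max (Sgt d' a - α) 0) := by
      rw [xi_formula α hα d hd0 hdα a, xi_formula α hα d' hd'0 hd'α a]
      ring
    rw [hdiff, hGdef, hHdef]
    simp only []
    have hs := step_abs α (Sgt d a) (Sgt d' a) (d a) (d' a) (hd0 a) (hd'0 a)
    rw [Sge_eq d a, Sge_eq d' a]
    linarith
  have hHG : ∑ a, H a ≤ ∑ a, G a := by
    set s := Finset.univ.filter
      (fun a : A => (Finset.univ.filter (fun c => a < c)).Nonempty) with hs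
    have hHs : ∀ (a : A) (hex : (Finset.univ.filter (fun c => a < c)).Nonempty),
        H a = G ((Finset.univ.filter (fun c => a < c)).min' hex) := by
      intro a hex
      have e1 : Sgt d a = Sge d ((Finset.univ.filter (fun c => a < c)).min' hex) := by
        rw [sgt_eq, dif_pos hex]
      have e2 : Sgt d' a = Sge d' ((Finset.univ.filter (fun c => a < c)).min' hex) := by
        rw [sgt_eq, dif_pos hex]
      rw [hHdef, hGdef]
      simp only []
      rw [e1, e2]
    have e0 : ∑ a, H a = ∑ a ∈ s, H a := by
      symm
      apply Finset.sum_subset (Finset.subset_univ s)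
      intro a _ ha
      have hex : ¬ (Finset.univ.filter (fun c => a < c)).Nonempty := by
        simpa [hs] using ha
      have e1 : Sgt d a = 0 := by rw [sgt_eq, dif_neg hex]
      have e2 : Sgt d' a = 0 := by rw [sgt_eq, dif_neg hex]
      rw [hHdef]
      simp only []
      rw [e1, e2]
      simp
    rw [e0]
    have hinj : Set.InjOn (fun a : A =>
        if hex : (Finset.univ.filter (fun c => a < c)).Nonempty
        then (Finset.univ.filter (fun c => a < c)).min' hex else a) ↑s := by
      intro a1 h1 a2 h2 heq
      have hex1 : (Finset.univ.filter (fun c => a1 < c)).Nonempty := by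
        simpa [hs] using (mem_filter.mp h1).2
      have hex2 : (Finset.univ.filter (fun c => a2 < c)).Nonempty := by
        simpa [hs] using (mem_filter.mp h2).2
      simp only [dif_pos hex1, dif_pos hex2] at heq
      by_contra hne
      rcases lt_or_gt_of_ne hne with hlt | hlt
      · have h3 : (Finset.univ.filter (fun c => a1 < c)).min' hex1 ≤ a2 :=
          Finset.min'_le _ _ (by simp [hlt])
        have h4 : a2 < (Finset.univ.filter (fun c => a2 < c)).min' hex2 :=
          (mem_filter.mp (Finset.min'_mem _ hex2)).2
        rw [heq] at h3
        exact absurd h3 (not_le.mpr h4)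
      · have h3 : (Finset.univ.filter (fun c => a2 < c)).min' hex2 ≤ a1 :=
          Finset.min'_le _ _ (by simp [hlt])
        have h4 : a1 < (Finset.univ.filter (fun c => a1 < c)).min' hex1 :=
          (mem_filter.mp (Finset.min'_mem _ hex1)).2
        rw [← heq] at h3
        exact absurd h3 (not_le.mpr h4)
    set f : A → A := fun a => if hex : (Finset.univ.filter (fun c => a < c)).Nonempty
        then (Finset.univ.filter (fun c => a < c)).min' hex else a with hf
    have e1 : ∑ a ∈ s, H a = ∑ a ∈ s, G (f a) := by
      apply Finset.sum_congr rfl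
      intro a ha
      have hex : (Finset.univ.filter (fun c => a < c)).Nonempty := by
        simpa [hs] using (mem_filter.mp ha).2
      rw [hHs a hex, hf]
      simp only [dif_pos hex]
    have e2 : ∑ a ∈ s, G (f a) = ∑ b ∈ s.image f, G b :=
      (Finset.sum_image (fun a ha b hb hab => hinj ha hb hab)).symm
    rw [e1, e2]
    exact Finset.sum_le_sum_of_subset_of_nonneg (Finset.subset_univ _) (fun b _ _ => hG0 b)
  calc ∑ a, |Xi α d a - Xi α d' a|
      ≤ ∑ a, (|d a - d' a| + H a - G a) := Finset.sum_le_sum (fun a _ => hstep a)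
    _ = (∑ a, (|d a - d' a| + H a)) - ∑ a, G a := by rw [Finset.sum_sub_distrib]
    _ = (∑ a, |d a - d' a|) + (∑ a, H a) - ∑ a, G a := by rw [Finset.sum_add_distrib]
    _ ≤ ∑ a, |d a - d' a| := by linarith
end

section
/- With the threshold-allocation map Ξ_α as defined (zeroing mass above the threshold, partially scaling at the threshold, leaving mass below unchanged), for a fixed subprobability vector d on a finite totally ordered set and any α₁, α₂ ∈ [0, ‖d‖₁], we have ‖Ξ_{α₁}(d) − Ξ_{α₂}(d)‖₁ ≤ |α₁ − α₂|. -/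
open Finset

variable {A : Type*} [Fintype A] [LinearOrder A] [Nonempty A]

/-- `Sge d a = d a + ∑_{a' > a} d a'`. -/
lemma Sge_eq_add (d : A → ℝ) (a : A) :
    Sge d a = d a + ∑ a' ∈ Finset.univ.filter (fun a' => a < a'), d a' := by
  classical
  have hset : Finset.univ.filter (fun a' => a ≤ a')
      = insert a (Finset.univ.filter (fun a' => a < a')) := by
    ext x
    simp only [mem_filter, mem_univ, true_and, mem_insert]
    constructor
    · intro h
      rcases h.lt_or_eq with h | h
      · exact Or.inr h
      · exact Or.inl h.symm
    · rintro (rfl | h)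
      · exact le_rfl
      · exact h.le
  rw [Sge, hset, Finset.sum_insert (by simp)]

/-- If the set above `a` is nonempty with minimum `c`, then
`Sge d c = ∑_{a' > a} d a'`. -/
lemma Sge_min_gt (d : A → ℝ) (a : A)
    (hne : (Finset.univ.filter (fun a' => a < a')).Nonempty) :
    Sge d ((Finset.univ.filter (fun a' => a < a')).min' hne)
      = ∑ a' ∈ Finset.univ.filter (fun a' => a < a'), d a' := by
  classical
  set c := (Finset.univ.filter (fun a' => a < a')).min' hne with hc
  have hcmem : c ∈ Finset.univ.filter (fun a' => a < a') := Finset.min'_mem _ _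
  simp only [mem_filter, mem_univ, true_and] at hcmem
  have hset : Finset.univ.filter (fun a' => c ≤ a')
      = Finset.univ.filter (fun a' => a < a') := by
    ext x
    simp only [mem_filter, mem_univ, true_and]
    constructor
    · intro h; exact lt_of_lt_of_le hcmem h
    · intro h; exact Finset.min'_le _ x (by simp [h])
  rw [Sge, hset]

/-- If `α ≤ Sge d a` with `α > 0`, there is a threshold candidate above `a`. -/
lemma exists_th (d : A → ℝ) (hd0 : ∀ a, 0 ≤ d a) {α : ℝ} (hα : 0 < α) {a : A}
    (ha : α ≤ Sge d a) : ∃ b, a ≤ b ∧ α ≤ Sge d b ∧ 0 < d b := by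
  classical
  set S := Finset.univ.filter (fun a' => a ≤ a' ∧ α ≤ Sge d a') with hS
  have hSne : S.Nonempty := ⟨a, by simp [hS, ha]⟩
  set b := S.max' hSne with hb
  have hbS : b ∈ S := S.max'_mem hSne
  simp only [hS, mem_filter, mem_univ, true_and] at hbS
  refine ⟨b, hbS.1, hbS.2, ?_⟩
  by_contra hdb
  have hdb0 : d b = 0 := le_antisymm (not_lt.mp hdb) (hd0 b)
  by_cases hTne : (Finset.univ.filter (fun a' => b < a')).Nonempty
  · set c := (Finset.univ.filter (fun a' => b < a')).min' hTne with hc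
    have hcmem : c ∈ Finset.univ.filter (fun a' => b < a') := Finset.min'_mem _ _
    simp only [mem_filter, mem_univ, true_and] at hcmem
    have hSc : Sge d c = Sge d b := by
      rw [Sge_min_gt d b hTne, Sge_eq_add d b, hdb0, zero_add]
    have hcS : c ∈ S := by
      simp only [hS, mem_filter, mem_univ, true_and]
      exact ⟨le_trans hbS.1 hcmem.le, hSc ▸ hbS.2⟩
    exact absurd (S.le_max' c hcS) (not_le.mpr hcmem)
  · have : Sge d b = 0 := by
      rw [Sge_eq_add d b, hdb0, zero_add,
        Finset.not_nonempty_iff_eq_empty.mp hTne, Finset.sum_empty]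
    linarith [hbS.2]

lemma Sge_min (d : A → ℝ) : Sge d (Finset.univ.min' Finset.univ_nonempty) = ∑ a, d a := by
  classical
  rw [Sge]
  congr 1
  ext x
  simp [Finset.min'_le _ x (Finset.mem_univ x)]

lemma thSet_nonempty (d : A → ℝ) (hd0 : ∀ a, 0 ≤ d a) {α : ℝ} (hα : 0 < α)
    (hα' : α ≤ ∑ a, d a) : (thSet d α).Nonempty := by
  obtain ⟨b, _, h1, h2⟩ := exists_th d hd0 hα (a := Finset.univ.min' Finset.univ_nonempty)
    (by rw [Sge_min]; exact hα')
  exact ⟨b, by simp [thSet, h1, h2]⟩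

lemma th_mem (d : A → ℝ) (hd0 : ∀ a, 0 ≤ d a) {α : ℝ} (hα : 0 < α)
    (hα' : α ≤ ∑ a, d a) : α ≤ Sge d (Th d α) ∧ 0 < d (Th d α) := by
  have hne := thSet_nonempty d hd0 hα hα'
  have : Th d α ∈ thSet d α := by
    rw [Th, dif_pos hne]; exact (thSet d α).max'_mem hne
  simpa [thSet] using this

/-- Above the threshold, the tail mass is below `α`. -/
lemma Sge_lt_of_gt_th (d : A → ℝ) (hd0 : ∀ a, 0 ≤ d a) {α : ℝ} (hα : 0 < α)
    (hα' : α ≤ ∑ a, d a) {a : A} (ha : Th d α < a) : Sge d a < α := by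
  by_contra h
  obtain ⟨b, hab, h1, h2⟩ := exists_th d hd0 hα (not_lt.mp h)
  have hne := thSet_nonempty d hd0 hα hα'
  have hbmem : b ∈ thSet d α := by simp [thSet, h1, h2]
  have : b ≤ Th d α := by rw [Th, dif_pos hne]; exact (thSet d α).le_max' b hbmem
  exact absurd (lt_of_lt_of_le ha hab) (not_lt.mpr this)

/-- The mass strictly above the threshold is at most `α`. -/
lemma sum_gt_th_le (d : A → ℝ) (hd0 : ∀ a, 0 ≤ d a) {α : ℝ} (hα : 0 < α)
    (hα' : α ≤ ∑ a, d a) :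
    ∑ a' ∈ Finset.univ.filter (fun a' => Th d α < a'), d a' ≤ α := by
  by_cases hTne : (Finset.univ.filter (fun a' => Th d α < a')).Nonempty
  · set c := (Finset.univ.filter (fun a' => Th d α < a')).min' hTne with hc
    have hcmem : c ∈ Finset.univ.filter (fun a' => Th d α < a') := Finset.min'_mem _ _
    simp only [mem_filter, mem_univ, true_and] at hcmem
    rw [← Sge_min_gt d (Th d α) hTne]
    exact (Sge_lt_of_gt_th d hd0 hα hα' hcmem).le
  · rw [Finset.not_nonempty_iff_eq_empty.mp hTne, Finset.sum_empty]
    exact hα.le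

lemma Xi_pos (d : A → ℝ) {α : ℝ} (hα : α ≠ 0) (a : A) :
    Xi α d a = if Th d α < a then 0 else if a = Th d α then Sge d (Th d α) - α else d a := by
  rw [Xi, if_neg hα]

lemma Th_eq (d : A → ℝ) {α : ℝ} (h : (thSet d α).Nonempty) :
    Th d α = (thSet d α).max' h := dif_pos h

/-- `Xi α d ≤ d` pointwise. -/
lemma xi_le_d (d : A → ℝ) (hd0 : ∀ a, 0 ≤ d a) {α : ℝ} (hα : 0 ≤ α)
    (hα' : α ≤ ∑ a, d a) (a : A) : Xi α d a ≤ d a := by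
  rcases hα.lt_or_eq with hα | hα
  · rw [Xi_pos d hα.ne']
    by_cases h1 : Th d α < a
    · rw [if_pos h1]; exact hd0 a
    · rw [if_neg h1]
      by_cases h2 : a = Th d α
      · rw [if_pos h2, h2]
        have := sum_gt_th_le d hd0 hα hα'
        have heq := Sge_eq_add d (Th d α)
        linarith
      · rw [if_neg h2]
  · rw [Xi, if_pos hα.symm]

/-- Total mass of `Xi α d` is `∑ d − α`. -/
lemma xi_mass (d : A → ℝ) (hd0 : ∀ a, 0 ≤ d a) {α : ℝ} (hα : 0 ≤ α)
    (hα' : α ≤ ∑ a, d a) : ∑ a, Xi α d a = (∑ a, d a) - α := by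
  classical
  rcases hα.lt_or_eq with hα | hα
  swap
  · rw [Xi, if_pos hα.symm, ← hα, sub_zero]

  · have hth := th_mem d hd0 hα hα'
    set abar := Th d α with habar
    have hsplit : ∀ f : A → ℝ, ∑ a, f a =
        (∑ a ∈ Finset.univ.filter (fun a => a < abar), f a) + f abar
          + ∑ a ∈ Finset.univ.filter (fun a => abar < a), f a := by
      intro f
      have key : ∑ a ∈ Finset.univ.filter (fun a => ¬ a < abar), f a
          = f abar + ∑ a ∈ Finset.univ.filter (fun a => abar < a), f a := by
        have hset : Finset.univ.filter (fun a => ¬ a < abar)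
            = insert abar (Finset.univ.filter (fun a => abar < a)) := by
          ext x
          simp only [mem_filter, mem_univ, true_and, mem_insert, not_lt]
          constructor
          · intro h
            rcases h.lt_or_eq with h | h
            · exact Or.inr h
            · exact Or.inl h.symm
          · rintro (rfl | h)
            · exact le_rfl
            · exact h.le
        rw [hset, Finset.sum_insert (by simp)]
      rw [← Finset.sum_filter_add_sum_filter_not Finset.univ (fun a => a < abar) f, key]
      ring
    rw [hsplit (Xi α d), hsplit d]
    have e1 : ∑ a ∈ Finset.univ.filter (fun a => a < abar), Xi α d a
        = ∑ a ∈ Finset.univ.filter (fun a => a < abar), d a := by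
      apply Finset.sum_congr rfl
      intro x hx
      simp only [mem_filter, mem_univ, true_and] at hx
      rw [Xi_pos d hα.ne', if_neg (not_lt.mpr hx.le), if_neg hx.ne]
    have e2 : Xi α d abar = Sge d abar - α := by
      rw [Xi_pos d hα.ne', habar, if_neg (lt_irrefl _), if_pos rfl]
    have e3 : ∑ a ∈ Finset.univ.filter (fun a => abar < a), Xi α d a = 0 := by
      apply Finset.sum_eq_zero
      intro x hx
      simp only [mem_filter, mem_univ, true_and] at hx
      rw [Xi_pos d hα.ne', if_pos hx]
    have heq := Sge_eq_add d abar
    rw [e1, e2, e3]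
    linarith

/-- Pointwise monotonicity: `Xi` decreases as `α` increases. -/
lemma xi_mono (d : A → ℝ) (hd0 : ∀ a, 0 ≤ d a) {α β : ℝ} (hα : 0 ≤ α) (hαβ : α ≤ β)
    (hβ' : β ≤ ∑ a, d a) (a : A) : Xi β d a ≤ Xi α d a := by
  rcases hα.lt_or_eq with hα | hα
  swap
  · have hXi : Xi α d = d := by rw [Xi, if_pos hα.symm]
    rw [hXi]
    exact xi_le_d d hd0 (hα ▸ hαβ) hβ' a
  · have hβ : 0 < β := lt_of_lt_of_le hα hαβ
    have hα' : α ≤ ∑ a, d a := le_trans hαβ hβ'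
    have hthα := th_mem d hd0 hα hα'
    have hthβ := th_mem d hd0 hβ hβ'
    have hneα := thSet_nonempty d hd0 hα hα'
    have hneβ := thSet_nonempty d hd0 hβ hβ'
    have hthle : Th d β ≤ Th d α := by
      have hmem : Th d β ∈ thSet d α := by
        simp only [thSet, mem_filter, mem_univ, true_and]
        exact ⟨le_trans hαβ hthβ.1, hthβ.2⟩
      rw [Th_eq d hneα]
      exact (thSet d α).le_max' _ hmem
    rw [Xi_pos d hα.ne', Xi_pos d hβ.ne']
    by_cases h1 : Th d α < a
    · rw [if_pos h1, if_pos (lt_of_le_of_lt hthle h1)]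
    · rw [if_neg h1]
      by_cases h2 : a = Th d α
      · rw [if_pos h2]
        by_cases h3 : Th d β < a
        · rw [if_pos h3]
          linarith [hthα.1]
        · rw [if_neg h3]
          have h4 : a = Th d β := le_antisymm (not_lt.mp h3) (h2 ▸ hthle)
          rw [if_pos h4, ← h4, h2]
          linarith
      · rw [if_neg h2]
        by_cases h3 : Th d β < a
        · rw [if_pos h3]; exact hd0 a
        · rw [if_neg h3]
          by_cases h4 : a = Th d β
          · rw [if_pos h4, h4]
            have := sum_gt_th_le d hd0 hβ hβ'
            have heq := Sge_eq_add d (Th d β)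
            linarith
          · rw [if_neg h4]

lemma xi_lipschitz_aux (d : A → ℝ) (hd0 : ∀ a, 0 ≤ d a)
    (α₁ α₂ : ℝ) (hα₁0 : 0 ≤ α₁) (hα₁₂ : α₁ ≤ α₂) (hα₂ : α₂ ≤ ∑ a, d a) :
    ∑ a, |Xi α₁ d a - Xi α₂ d a| ≤ |α₁ - α₂| := by
  have hmono := xi_mono d hd0 hα₁0 hα₁₂ hα₂
  have h1 : ∑ a, |Xi α₁ d a - Xi α₂ d a| = ∑ a, (Xi α₁ d a - Xi α₂ d a) := by
    apply Finset.sum_congr rfl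
    intro a _
    exact abs_of_nonneg (sub_nonneg.mpr (hmono a))
  rw [h1, Finset.sum_sub_distrib,
    xi_mass d hd0 hα₁0 (le_trans hα₁₂ hα₂),
    xi_mass d hd0 (le_trans hα₁0 hα₁₂) hα₂,
    abs_of_nonpos (by linarith : α₁ - α₂ ≤ 0)]
  ring_nf
  linarith

/-- For a fixed subprobability vector `d`, the threshold-allocation map is
1-Lipschitz in the allocation parameter `α`. -/
theorem xi_lipschitz_alpha
    (d : A → ℝ) (hd0 : ∀ a, 0 ≤ d a) (hd1 : ∑ a, d a ≤ 1)
    (α₁ α₂ : ℝ) (hα₁0 : 0 ≤ α₁) (hα₂0 : 0 ≤ α₂)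
    (hα₁ : α₁ ≤ ∑ a, d a) (hα₂ : α₂ ≤ ∑ a, d a) :
    ∑ a, |Xi α₁ d a - Xi α₂ d a| ≤ |α₁ - α₂| := by
  rcases le_total α₁ α₂ with h | h
  · exact xi_lipschitz_aux d hd0 α₁ α₂ hα₁0 h hα₂
  · have := xi_lipschitz_aux d hd0 α₂ α₁ hα₂0 h hα₁
    calc ∑ a, |Xi α₁ d a - Xi α₂ d a| = ∑ a, |Xi α₂ d a - Xi α₁ d a| := by
          apply Finset.sum_congr rfl; intro a _; rw [abs_sub_comm]
      _ ≤ |α₂ - α₁| := this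
      _ = |α₁ - α₂| := abs_sub_comm _ _
end

section
/- Combining Lipschitz continuity in both arguments: for subprobability vectors d, d' on a finite totally ordered set and thresholds α ∈ [0, ‖d‖₁), α' ∈ [0, ‖d'‖₁), the threshold-allocation map satisfies ‖Ξ_α(d) − Ξ_{α'}(d')‖₁ ≤ ‖d − d'‖₁ + |α − α'|. -/
open Finset

variable {A : Type*} [Fintype A] [LinearOrder A] [Nonempty A]

namespace XiAux

lemma sum_split_lt (m : A) (f : A → ℝ) :
    ∑ a, f a = (∑ a ∈ univ.filter (fun a => a < m), f a)
      + ∑ a ∈ univ.filter (fun a => m ≤ a), f a := by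
  rw [← Finset.sum_filter_add_sum_filter_not univ (fun a => a < m) f]
  congr 1
  apply Finset.sum_congr _ (fun _ _ => rfl)
  ext a; simp [not_lt]

lemma sum_ge_split (m : A) (f : A → ℝ) :
    ∑ a ∈ univ.filter (fun a => m ≤ a), f a
      = f m + ∑ a ∈ univ.filter (fun a => m < a), f a := by
  have h : univ.filter (fun a => m ≤ a) = insert m (univ.filter (fun a => m < a)) := by
    ext a
    simp only [mem_filter, mem_univ, true_and, mem_insert]
    exact ⟨fun h => h.lt_or_eq.elim (fun h' => Or.inr h') (fun h' => Or.inl h'.symm),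
      fun h => h.elim (fun h' => h' ▸ le_rfl) le_of_lt⟩
  rw [h, Finset.sum_insert (by simp)]

lemma sum_gt_split {m b : A} (hmb : m < b) (f : A → ℝ) :
    ∑ a ∈ univ.filter (fun a => m < a), f a
      = (∑ a ∈ univ.filter (fun a => m < a ∧ a < b), f a)
        + ∑ a ∈ univ.filter (fun a => b ≤ a), f a := by
  rw [← Finset.sum_filter_add_sum_filter_not (univ.filter (fun a => m < a)) (fun a => a < b) f,
      Finset.filter_filter, Finset.filter_filter]
  congr 1
  apply Finset.sum_congr _ (fun _ _ => rfl)
  ext a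
  simp only [mem_filter, mem_univ, true_and, not_lt]
  exact ⟨fun h => h.2, fun h => ⟨lt_of_lt_of_le hmb h, h⟩⟩

lemma sge_eq (d : A → ℝ) (m : A) :
    Sge d m = d m + ∑ a ∈ univ.filter (fun a => m < a), d a :=
  sum_ge_split m d

variable {d : A → ℝ} {α : ℝ}

lemma thSet_nonempty (hd0 : ∀ a, 0 ≤ d a) (hα0 : 0 ≤ α) (hα : α < ∑ a, d a) :
    (thSet d α).Nonempty := by
  have hsupp : (univ.filter (fun a => 0 < d a)).Nonempty := by
    by_contra h
    rw [Finset.not_nonempty_iff_eq_empty, Finset.filter_eq_empty_iff] at h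
    have hs : ∑ a, d a ≤ 0 := Finset.sum_nonpos (fun a _ => not_lt.mp (h (mem_univ a)))
    linarith
  set a₀ := (univ.filter (fun a => 0 < d a)).min' hsupp with ha₀
  have ha₀mem := Finset.min'_mem _ hsupp
  have hpos : 0 < d a₀ := (mem_filter.mp ha₀mem).2
  have hzero : ∀ a ∈ univ.filter (fun a => a < a₀), d a = 0 := by
    intro a ha
    simp only [mem_filter, mem_univ, true_and] at ha
    by_contra hc
    have hp : 0 < d a := lt_of_le_of_ne (hd0 a) (Ne.symm hc)
    have := Finset.min'_le (univ.filter (fun a => 0 < d a)) a (mem_filter.mpr ⟨mem_univ a, hp⟩)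
    exact absurd (lt_of_lt_of_le ha this) (lt_irrefl _)
  have hS : Sge d a₀ = ∑ a, d a := by
    rw [sum_split_lt a₀ d, Finset.sum_eq_zero hzero, zero_add]; rfl
  refine ⟨a₀, ?_⟩
  simp only [thSet, mem_filter, mem_univ, true_and]
  exact ⟨by rw [hS]; exact hα.le, hpos⟩

lemma th_mem (h : (thSet d α).Nonempty) : Th d α ∈ thSet d α := by
  rw [Th, dif_pos h]; exact Finset.max'_mem _ h

lemma th_spec (h : (thSet d α).Nonempty) :
    α ≤ Sge d (Th d α) ∧ 0 < d (Th d α) := by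
  have := th_mem h
  simpa [thSet] using this

lemma le_th (h : (thSet d α).Nonempty) {b : A} (hb : b ∈ thSet d α) : b ≤ Th d α := by
  rw [Th, dif_pos h]; exact Finset.le_max' _ _ hb

lemma tail_le (hd0 : ∀ a, 0 ≤ d a) (hα0 : 0 ≤ α) (h : (thSet d α).Nonempty) :
    ∑ a ∈ univ.filter (fun a => Th d α < a), d a ≤ α := by
  set m := Th d α with hm
  by_cases hB : (univ.filter (fun a => m < a ∧ 0 < d a)).Nonempty
  · set b := (univ.filter (fun a => m < a ∧ 0 < d a)).min' hB with hb
    have hbmem := Finset.min'_mem _ hB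
    simp only [mem_filter, mem_univ, true_and] at hbmem
    obtain ⟨hmb, hdb⟩ := hbmem
    have hnot : Sge d b < α := by
      by_contra hc
      push_neg at hc
      have hb_th : b ∈ thSet d α := by
        simp only [thSet, mem_filter, mem_univ, true_and]; exact ⟨hc, hdb⟩
      exact absurd (le_th h hb_th) (not_le.mpr hmb)
    have hmid : ∀ a ∈ univ.filter (fun a => m < a ∧ a < b), d a = 0 := by
      intro a ha
      simp only [mem_filter, mem_univ, true_and] at ha
      by_contra hc
      have hp : 0 < d a := lt_of_le_of_ne (hd0 a) (Ne.symm hc)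
      have := Finset.min'_le (univ.filter (fun a => m < a ∧ 0 < d a)) a
        (mem_filter.mpr ⟨mem_univ a, ha.1, hp⟩)
      exact absurd (lt_of_lt_of_le ha.2 this) (lt_irrefl _)
    calc ∑ a ∈ univ.filter (fun a => m < a), d a
        = (∑ a ∈ univ.filter (fun a => m < a ∧ a < b), d a)
            + ∑ a ∈ univ.filter (fun a => b ≤ a), d a := sum_gt_split hmb d
      _ = Sge d b := by rw [Finset.sum_eq_zero hmid, zero_add]; rfl
      _ ≤ α := hnot.le
  · rw [Finset.not_nonempty_iff_eq_empty, Finset.filter_eq_empty_iff] at hB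
    have : ∀ a ∈ univ.filter (fun a => m < a), d a = 0 := by
      intro a ha
      simp only [mem_filter, mem_univ, true_and] at ha
      have := hB (mem_univ a)
      push_neg at this
      exact le_antisymm (this ha) (hd0 a)
    rw [Finset.sum_eq_zero this]; exact hα0

lemma xi_of_gt (hd0 : ∀ a, 0 ≤ d a) (hα0 : 0 ≤ α) (hα : α < ∑ a, d a)
    {a : A} (ha : Th d α < a) : Xi α d a = 0 := by
  by_cases h0 : α = 0
  · subst h0
    rw [show Xi (0:ℝ) d = d from by simp [Xi]]
    by_contra hc
    have hp : 0 < d a := lt_of_le_of_ne (hd0 a) (Ne.symm hc)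
    have hmem : a ∈ thSet d 0 := by
      simp only [thSet, mem_filter, mem_univ, true_and]
      exact ⟨Finset.sum_nonneg (fun x _ => hd0 x), hp⟩
    exact absurd (le_th (thSet_nonempty hd0 le_rfl hα) hmem) (not_le.mpr ha)
  · simp [Xi, h0, ha]

lemma xi_of_lt (hd0 : ∀ a, 0 ≤ d a) (hα0 : 0 ≤ α) (hα : α < ∑ a, d a)
    {a : A} (ha : a < Th d α) : Xi α d a = d a := by
  by_cases h0 : α = 0
  · simp [Xi, h0]
  · simp [Xi, h0, not_lt.mpr ha.le, ha.ne]

lemma xi_of_th (hd0 : ∀ a, 0 ≤ d a) (hα0 : 0 ≤ α) (hα : α < ∑ a, d a) :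
    Xi α d (Th d α) = Sge d (Th d α) - α := by
  have hne := thSet_nonempty hd0 hα0 hα
  by_cases h0 : α = 0
  · subst h0
    rw [show Xi (0:ℝ) d = d from by simp [Xi], sub_zero]
    have htail : ∑ a ∈ univ.filter (fun a => Th d 0 < a), d a = 0 :=
      le_antisymm (tail_le hd0 le_rfl hne)
        (Finset.sum_nonneg (fun x _ => hd0 x))
    rw [sge_eq, htail, add_zero]
  · simp [Xi, h0]

lemma xi_th_nonneg (hd0 : ∀ a, 0 ≤ d a) (hα0 : 0 ≤ α) (hα : α < ∑ a, d a) :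
    0 ≤ Sge d (Th d α) - α :=
  sub_nonneg.mpr (th_spec (thSet_nonempty hd0 hα0 hα)).1

lemma xi_th_le (hd0 : ∀ a, 0 ≤ d a) (hα0 : 0 ≤ α) (hα : α < ∑ a, d a) :
    Sge d (Th d α) - α ≤ d (Th d α) := by
  have := tail_le hd0 hα0 (thSet_nonempty hd0 hα0 hα)
  have h2 := sge_eq d (Th d α)
  linarith

end XiAux

namespace XiAux

lemma xi_nonneg (d : A → ℝ) (α : ℝ) (hd0 : ∀ a, 0 ≤ d a) (hα0 : 0 ≤ α)
    (hα : α < ∑ a, d a) (a : A) : 0 ≤ Xi α d a := by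
  rcases lt_trichotomy a (Th d α) with h | h | h
  · rw [xi_of_lt hd0 hα0 hα h]; exact hd0 a
  · rw [h, xi_of_th hd0 hα0 hα]; exact xi_th_nonneg hd0 hα0 hα
  · rw [xi_of_gt hd0 hα0 hα h]

lemma key (d d' : A → ℝ)
    (hd0 : ∀ a, 0 ≤ d a) (hd'0 : ∀ a, 0 ≤ d' a)
    (α α' : ℝ) (hα0 : 0 ≤ α) (hα'0 : 0 ≤ α')
    (hα : α < ∑ a, d a) (hα' : α' < ∑ a, d' a)
    (h : Th d α ≤ Th d' α') :
    ∑ a, |Xi α d a - Xi α' d' a| ≤ (∑ a, |d a - d' a|) + |α - α'| := by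
  have hne := thSet_nonempty hd0 hα0 hα
  have hne' := thSet_nonempty hd'0 hα'0 hα'
  have hRHS : ∑ a, |d a - d' a|
      = (∑ a ∈ univ.filter (fun a => a < Th d α), |d a - d' a|)
        + (|d (Th d α) - d' (Th d α)|
          + ∑ a ∈ univ.filter (fun a => Th d α < a), |d a - d' a|) := by
    rw [sum_split_lt (Th d α) (fun a => |d a - d' a|),
        sum_ge_split (Th d α) (fun a => |d a - d' a|)]
  rcases eq_or_lt_of_le h with heq | hlt
  · -- equal thresholds
    have hlow : ∑ a ∈ univ.filter (fun a => a < Th d α), |Xi α d a - Xi α' d' a|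
        = ∑ a ∈ univ.filter (fun a => a < Th d α), |d a - d' a| := by
      apply Finset.sum_congr rfl
      intro a ha
      simp only [mem_filter, mem_univ, true_and] at ha
      rw [xi_of_lt hd0 hα0 hα ha, xi_of_lt hd'0 hα'0 hα' (heq ▸ ha)]
    have htop : ∑ a ∈ univ.filter (fun a => Th d α < a), |Xi α d a - Xi α' d' a| = 0 := by
      apply Finset.sum_eq_zero
      intro a ha
      simp only [mem_filter, mem_univ, true_and] at ha
      rw [xi_of_gt hd0 hα0 hα ha, xi_of_gt hd'0 hα'0 hα' (heq ▸ ha), sub_zero, abs_zero]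
    have hmidL : Xi α d (Th d α) = Sge d (Th d α) - α := xi_of_th hd0 hα0 hα
    have hmidR : Xi α' d' (Th d α) = Sge d' (Th d α) - α' := by
      rw [heq]; exact xi_of_th hd'0 hα'0 hα'
    have hsge : |Sge d (Th d α) - Sge d' (Th d α)|
        ≤ |d (Th d α) - d' (Th d α)|
          + ∑ a ∈ univ.filter (fun a => Th d α < a), |d a - d' a| := by
      rw [← sum_ge_split (Th d α) (fun a => |d a - d' a|)]
      simp only [Sge]
      rw [← Finset.sum_sub_distrib]
      exact Finset.abs_sum_le_sum_abs _ _
    rw [sum_split_lt (Th d α) (fun a => |Xi α d a - Xi α' d' a|),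
        sum_ge_split (Th d α) (fun a => |Xi α d a - Xi α' d' a|),
        hlow, htop, hmidL, hmidR, hRHS]
    rcases abs_cases (Sge d (Th d α) - α - (Sge d' (Th d α) - α')) with ⟨e1, _⟩ | ⟨e1, _⟩ <;>
      rcases abs_cases (Sge d (Th d α) - Sge d' (Th d α)) with ⟨e2, _⟩ | ⟨e2, _⟩ <;>
      rcases abs_cases (α - α') with ⟨e3, _⟩ | ⟨e3, _⟩ <;>
      linarith
  · -- Th d α < Th d' α'
    have hx1 : 0 ≤ Sge d (Th d α) - α := xi_th_nonneg hd0 hα0 hα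
    have hx2 : Sge d (Th d α) - α ≤ d (Th d α) := xi_th_le hd0 hα0 hα
    have hT : ∑ a ∈ univ.filter (fun a => Th d α < a), d a ≤ α := tail_le hd0 hα0 hne
    have hS' : α' ≤ Sge d' (Th d' α') := (th_spec hne').1
    have hTT' : (∑ a ∈ univ.filter (fun a => Th d α < a), d' a)
        - (∑ a ∈ univ.filter (fun a => Th d α < a), d a)
        ≤ ∑ a ∈ univ.filter (fun a => Th d α < a), |d a - d' a| := by
      rw [← Finset.sum_sub_distrib]
      apply Finset.sum_le_sum
      intro a _
      calc d' a - d a ≤ |d' a - d a| := le_abs_self _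
        _ = |d a - d' a| := abs_sub_comm _ _
    have f2 : ∑ a ∈ univ.filter (fun a => Th d α < a), d' a
        = (∑ a ∈ univ.filter (fun a => Th d α < a ∧ a < Th d' α'), d' a)
          + Sge d' (Th d' α') := by
      rw [sum_gt_split hlt d']; rfl
    have hLHS : ∑ a, |Xi α d a - Xi α' d' a|
        = (∑ a ∈ univ.filter (fun a => a < Th d α), |d a - d' a|)
          + (|Sge d (Th d α) - α - d' (Th d α)|
            + ((∑ a ∈ univ.filter (fun a => Th d α < a ∧ a < Th d' α'), d' a)
              + (Sge d' (Th d' α') - α'))) := by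
      rw [sum_split_lt (Th d α) (fun a => |Xi α d a - Xi α' d' a|),
          sum_ge_split (Th d α) (fun a => |Xi α d a - Xi α' d' a|)]
      congr 1
      · apply Finset.sum_congr rfl
        intro a ha
        simp only [mem_filter, mem_univ, true_and] at ha
        rw [xi_of_lt hd0 hα0 hα ha, xi_of_lt hd'0 hα'0 hα' (ha.trans hlt)]
      congr 1
      · rw [xi_of_th hd0 hα0 hα, xi_of_lt hd'0 hα'0 hα' hlt]
      · have hzero : ∀ a ∈ univ.filter (fun a => Th d α < a),
            |Xi α d a - Xi α' d' a| = Xi α' d' a := by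
          intro a ha
          simp only [mem_filter, mem_univ, true_and] at ha
          rw [xi_of_gt hd0 hα0 hα ha, zero_sub, abs_neg,
            abs_of_nonneg (xi_nonneg d' α' hd'0 hα'0 hα' a)]
        rw [Finset.sum_congr rfl hzero, sum_gt_split hlt (Xi α' d')]
        congr 1
        · apply Finset.sum_congr rfl
          intro a ha
          simp only [mem_filter, mem_univ, true_and] at ha
          exact xi_of_lt hd'0 hα'0 hα' ha.2
        · rw [sum_ge_split (Th d' α') (Xi α' d'), xi_of_th hd'0 hα'0 hα',
            Finset.sum_eq_zero (fun a ha => xi_of_gt hd'0 hα'0 hα' (by simpa using ha)),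
            add_zero]
    have hSm : Sge d (Th d α)
        = d (Th d α) + ∑ a ∈ univ.filter (fun a => Th d α < a), d a := sge_eq d _
    rw [hLHS, hRHS]
    rcases abs_cases (Sge d (Th d α) - α - d' (Th d α)) with ⟨e1, _⟩ | ⟨e1, _⟩ <;>
      rcases abs_cases (d (Th d α) - d' (Th d α)) with ⟨e2, _⟩ | ⟨e2, _⟩ <;>
      rcases abs_cases (α - α') with ⟨e3, _⟩ | ⟨e3, _⟩ <;>
      linarith

end XiAux

/-- Joint Lipschitz continuity of the threshold-allocation map: it is
1-Lipschitz in the distribution (ℓ¹) and in the allocation parameter. -/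
theorem xi_joint_lipschitz
    (d d' : A → ℝ)
    (hd0 : ∀ a, 0 ≤ d a) (hd'0 : ∀ a, 0 ≤ d' a)
    (hd1 : ∑ a, d a ≤ 1) (hd'1 : ∑ a, d' a ≤ 1)
    (α α' : ℝ) (hα0 : 0 ≤ α) (hα'0 : 0 ≤ α')
    (hα : α < ∑ a, d a) (hα' : α' < ∑ a, d' a) :
    ∑ a, |Xi α d a - Xi α' d' a| ≤ (∑ a, |d a - d' a|) + |α - α'| := by
  rcases le_total (Th d α) (Th d' α') with h | h
  · exact XiAux.key d d' hd0 hd'0 α α' hα0 hα'0 hα hα' h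
  · have hsymm := XiAux.key d' d hd'0 hd0 α' α hα'0 hα0 hα' hα h
    have e1 : ∑ a, |Xi α d a - Xi α' d' a| = ∑ a, |Xi α' d' a - Xi α d a| :=
      Finset.sum_congr rfl (fun a _ => abs_sub_comm _ _)
    have e2 : ∑ a, |d' a - d a| = ∑ a, |d a - d' a| :=
      Finset.sum_congr rfl (fun a _ => abs_sub_comm _ _)
    rw [e1, ← e2, abs_sub_comm α α']
    exact hsymm
end

section
/- Adjoint method correctness: let Θ ⊂ ℝ^{d'} be open and F : Θ × ℝ^d → ℝ^d, G : Θ × ℝ^d → ℝ be differentiable. Fix θ ∈ Θ, ζ₀ ∈ ℝ^d, η, τ > 0, T ∈ ℕ. Define forward iterates ζ_{t+1} = (1 − ητ)ζ_t + ηF(θ, ζ_t) for t = 0,...,T, and backward iterates a_T = −∂_ζ G(θ, ζ_{T+1}), s_{T+1} = ∂_θ G(θ, ζ_{T+1}), with a_{t−1} = (1−ητ)a_t + η a_t ∂_ζ F(θ, ζ_t) and s_{t−1} = s_t − η a_t ∂_θ F(θ, ζ_t) for t = T,...,0. Then s₀ equals the total derivative ∇_θ [G(θ, ζ_{T+1}(θ))],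 where ζ_{T+1}(θ) is the (T+1)-fold iterate viewed as a function of θ. -/
open ContinuousLinearMap in
lemma chain_partial {E G H : Type*}
    [NormedAddCommGroup E] [NormedSpace ℝ E]
    [NormedAddCommGroup G] [NormedSpace ℝ G]
    [NormedAddCommGroup H] [NormedSpace ℝ H]
    (f : E × G → H) (g : E → G) (x : E)
    (hf : DifferentiableAt ℝ f (x, g x)) (hg : DifferentiableAt ℝ g x) :
    fderiv ℝ (fun x' => f (x', g x')) x =
      fderiv ℝ (fun x' => f (x', g x)) x +
        (fderiv ℝ (fun y => f (x, y)) (g x)).comp (fderiv ℝ g x) := by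
  set L := fderiv ℝ f (x, g x) with hL
  have h1 : HasFDerivAt (fun x' => (x', g x'))
      ((ContinuousLinearMap.id ℝ E).prod (fderiv ℝ g x)) x :=
    (hasFDerivAt_id x).prodMk hg.hasFDerivAt
  have h2 : fderiv ℝ (fun x' => f (x', g x')) x =
      L.comp ((ContinuousLinearMap.id ℝ E).prod (fderiv ℝ g x)) :=
    (hf.hasFDerivAt.comp x h1).fderiv
  have h3 : fderiv ℝ (fun x' => f (x', g x)) x =
      L.comp ((ContinuousLinearMap.id ℝ E).prod 0) :=
    (hf.hasFDerivAt.comp x ((hasFDerivAt_id x).prodMk (hasFDerivAt_const (g x) x))).fderiv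
  have h4 : fderiv ℝ (fun y => f (x, y)) (g x) =
      L.comp ((0 : G →L[ℝ] E).prod (ContinuousLinearMap.id ℝ G)) :=
    (hf.hasFDerivAt.comp (g x) ((hasFDerivAt_const x (g x)).prodMk (hasFDerivAt_id (g x)))).fderiv
  rw [h2, h3, h4]
  ext v
  simp only [ContinuousLinearMap.comp_apply, ContinuousLinearMap.prod_apply,
    ContinuousLinearMap.add_apply, ContinuousLinearMap.id_apply,
    ContinuousLinearMap.zero_apply]
  rw [← map_add]
  simp

/-- Correctness of the adjoint method (AMID backward pass): the backward
recursion computes the total derivative of `θ ↦ G(θ, ζ_{T+1}(θ))`, where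
`ζ_{T+1}(θ)` is the `(T+1)`-fold forward iterate
`ζ_{t+1} = (1 − ητ) ζ_t + η F(θ, ζ_t)` starting from the constant `ζ₀`. -/
theorem adjoint_method_correct
    {d d' : ℕ}
    (Θ : Set (Fin d' → ℝ)) (hΘ : IsOpen Θ)
    (F : (Fin d' → ℝ) × (Fin d → ℝ) → (Fin d → ℝ))
    (G : (Fin d' → ℝ) × (Fin d → ℝ) → ℝ)
    (hF : ∀ p : (Fin d' → ℝ) × (Fin d → ℝ), p.1 ∈ Θ → DifferentiableAt ℝ F p)
    (hG : ∀ p : (Fin d' → ℝ) × (Fin d → ℝ), p.1 ∈ Θ → DifferentiableAt ℝ G p)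
    (θ : Fin d' → ℝ) (hθ : θ ∈ Θ)
    (ζ₀ : Fin d → ℝ) (η τ : ℝ) (hη : 0 < η) (hτ : 0 < τ) (T : ℕ)
    -- forward iterates, as a function of the parameter
    (zeta : ℕ → (Fin d' → ℝ) → (Fin d → ℝ))
    (hz0 : ∀ θ', zeta 0 θ' = ζ₀)
    (hzs : ∀ t θ', zeta (t + 1) θ' =
      (1 - η * τ) • zeta t θ' + η • F (θ', zeta t θ'))
    -- backward adjoint covectors a_T, …, a_0
    (a : ℕ → ((Fin d → ℝ) →L[ℝ] ℝ))
    (haT : a T = - fderiv ℝ (fun z => G (θ, z)) (zeta (T + 1) θ))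
    (haS : ∀ t, t < T → a t =
      (1 - η * τ) • a (t + 1) +
        η • ((a (t + 1)).comp (fderiv ℝ (fun z => F (θ, z)) (zeta (t + 1) θ))))
    -- backward gradient accumulators s_{T+1}, …, s_0
    (s : ℕ → ((Fin d' → ℝ) →L[ℝ] ℝ))
    (hsT : s (T + 1) = fderiv ℝ (fun θ' => G (θ', zeta (T + 1) θ)) θ)
    (hsS : ∀ t, t ≤ T → s t =
      s (t + 1) - η • ((a t).comp (fderiv ℝ (fun θ' => F (θ', zeta t θ)) θ))) :
    s 0 = fderiv ℝ (fun θ' => G (θ', zeta (T + 1) θ')) θ := by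
  -- abbreviations
  set D : ℕ → ((Fin d' → ℝ) →L[ℝ] (Fin d → ℝ)) := fun t => fderiv ℝ (zeta t) θ with hDdef
  -- differentiability of the forward iterates
  have hz0' : zeta 0 = fun _ => ζ₀ := funext hz0
  have hzs' : ∀ t, zeta (t + 1) =
      fun θ' => (1 - η * τ) • zeta t θ' + η • F (θ', zeta t θ') :=
    fun t => funext (hzs t)
  have hdz : ∀ t, DifferentiableAt ℝ (zeta t) θ := by
    intro t
    induction t with
    | zero => rw [hz0']; exact differentiableAt_const _
    | succ t ih =>
      rw [hzs' t]
      have hFt : DifferentiableAt ℝ (fun θ' => F (θ', zeta t θ')) θ :=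
        (hF (θ, zeta t θ) hθ).comp θ (differentiableAt_id.prodMk ih)
      exact (ih.fun_const_smul _).fun_add (hFt.fun_const_smul _)
  -- derivative recursion
  have hD0 : D 0 = 0 := by
    rw [hDdef]; simp only; rw [hz0']; exact fderiv_const_apply ζ₀
  have hDrec : ∀ t, D (t + 1) =
      (1 - η * τ) • D t +
        η • (fderiv ℝ (fun θ' => F (θ', zeta t θ)) θ +
             (fderiv ℝ (fun z => F (θ, z)) (zeta t θ)).comp (D t)) := by
    intro t
    have hFt : DifferentiableAt ℝ (fun θ' => F (θ', zeta t θ')) θ :=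
      (hF (θ, zeta t θ) hθ).comp θ (differentiableAt_id.prodMk (hdz t))
    have : D (t + 1) = fderiv ℝ
        (fun θ' => (1 - η * τ) • zeta t θ' + η • F (θ', zeta t θ')) θ := by
      rw [hDdef]; simp only; rw [hzs' t]
    rw [this, fderiv_fun_add ((hdz t).fun_const_smul _) (hFt.fun_const_smul _),
      fderiv_fun_const_smul (hdz t), fderiv_fun_const_smul hFt,
      chain_partial F (zeta t) θ (hF (θ, zeta t θ) hθ) (hdz t)]
  -- total derivative decomposition
  have htotal : fderiv ℝ (fun θ' => G (θ', zeta (T + 1) θ')) θ =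
      s (T + 1) - (a T).comp (D (T + 1)) := by
    rw [chain_partial G (zeta (T + 1)) θ (hG (θ, zeta (T + 1) θ) hθ) (hdz (T + 1)),
      ← hsT, haT]
    ext v
    simp
    rfl
  -- invariant: J t := s (t+1) - a t ∘ D (t+1) is constant for t ≤ T
  have key : ∀ k, k ≤ T →
      s (T - k + 1) - (a (T - k)).comp (D (T - k + 1)) =
        fderiv ℝ (fun θ' => G (θ', zeta (T + 1) θ')) θ := by
    intro k hk
    induction k with
    | zero => simpa using htotal.symm
    | succ k ih =>
      have hk' : k ≤ T := Nat.le_of_succ_le hk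
      have ht : T - (k + 1) + 1 = T - k := by omega
      have hlt : T - (k + 1) < T := by omega
      rw [← ih hk', ht, hsS (T - k) (Nat.sub_le T k), haS (T - (k + 1)) hlt, ht,
        hDrec (T - k)]
      ext v
      simp only [ContinuousLinearMap.sub_apply, ContinuousLinearMap.add_apply,
        ContinuousLinearMap.smul_apply, ContinuousLinearMap.comp_apply,
        map_add, map_smul, smul_eq_mul]
      ring
  have h0 := key T le_rfl
  simp only [Nat.sub_self] at h0
  rw [hsS 0 (Nat.zero_le T), ← h0, hDrec 0, hD0]
  ext v
  simp only [ContinuousLinearMap.sub_apply, ContinuousLinearMap.add_apply,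
    ContinuousLinearMap.smul_apply, ContinuousLinearMap.comp_apply,
    ContinuousLinearMap.zero_apply, map_add, map_smul, map_zero, smul_eq_mul,
    smul_zero, add_zero, zero_add]
end

section
/- Population flow Lipschitz in policy (one step): suppose Γ is a state-distribution update satisfying ‖Γ(L) − Γ(L')‖₁ ≤ β‖L − L'‖₁ for β = K_ξ(1 + K_α), and state-action distributions are built as L_h(s,a) = μ_h(s)π_h(a|s). If μ_{h+1} = Γ applied to L_h (composed with a transition), then for two policies π, π' with identical initial state distribution μ₀, the induced flows satisfy ‖L_h^π − L_h^{π'}‖₁ ≤ Σ_{h'≤h} β^{h−h'}·‖π_{h'} − π'_{h'}‖₁, where ‖π_{h'} − π'_{h'}‖₁ = sup_s Σ_a |π_{h'}(a|s) − π'_{h'}(a|s)|. -/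
open Finset

/-- One-step Lipschitz population updates propagate: if the state-distribution
update `Γ` is `β`-Lipschitz in ℓ¹ and maps distributions to distributions,
then the induced state-action population flows of two policies (from the same
initial distribution) satisfy
`‖L_h^π − L_h^{π'}‖₁ ≤ ∑_{h' ≤ h} β^{h−h'} sup_s ‖π_{h'}(·|s) − π'_{h'}(·|s)‖₁`. -/
theorem flow_lipschitz_in_policy
    {S A : Type*} [Fintype S] [Fintype A] [Nonempty S]
    (β : ℝ) (hβ : 0 ≤ β)
    (Γ : (S × A → ℝ) → (S → ℝ))
    (hΓlip : ∀ L L' : S × A → ℝ,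
      ∑ s, |Γ L s - Γ L' s| ≤ β * ∑ p, |L p - L' p|)
    (hΓprob : ∀ L : S × A → ℝ, (∀ p, 0 ≤ L p) → (∑ p, L p = 1) →
      (∀ s, 0 ≤ Γ L s) ∧ ∑ s, Γ L s = 1)
    (μ₀ : S → ℝ) (hμ₀0 : ∀ s, 0 ≤ μ₀ s) (hμ₀1 : ∑ s, μ₀ s = 1)
    (π π' : ℕ → S → A → ℝ)
    (hπ0 : ∀ h s a, 0 ≤ π h s a) (hπ1 : ∀ h s, ∑ a, π h s a = 1)
    (hπ'0 : ∀ h s a, 0 ≤ π' h s a) (hπ'1 : ∀ h s, ∑ a, π' h s a = 1)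
    (μ μ' : ℕ → S → ℝ) (L L' : ℕ → S × A → ℝ)
    (hμ0 : μ 0 = μ₀) (hμ'0 : μ' 0 = μ₀)
    (hL : ∀ h p, L h p = μ h p.1 * π h p.1 p.2)
    (hL' : ∀ h p, L' h p = μ' h p.1 * π' h p.1 p.2)
    (hμs : ∀ h, μ (h + 1) = Γ (L h))
    (hμ's : ∀ h, μ' (h + 1) = Γ (L' h)) :
    ∀ h, ∑ p, |L h p - L' h p| ≤
      ∑ h' ∈ Finset.range (h + 1), β ^ (h - h') *
        Finset.univ.sup' Finset.univ_nonempty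
          (fun s => ∑ a, |π h' s a - π' h' s a|) := by
  classical
  set d : ℕ → ℝ := fun h => Finset.univ.sup' Finset.univ_nonempty
      (fun s => ∑ a, |π h s a - π' h s a|) with hd
  have hprob : ∀ h, (∀ s, 0 ≤ μ h s) ∧ (∑ s, μ h s = 1) := by
    intro h
    induction h with
    | zero => rw [hμ0]; exact ⟨hμ₀0, hμ₀1⟩
    | succ h ih =>
      rw [hμs]
      refine hΓprob _ (fun p => ?_) ?_
      · rw [hL]; exact mul_nonneg (ih.1 _) (hπ0 _ _ _)
      · simp only [hL, Fintype.sum_prod_type, ← Finset.mul_sum, hπ1, mul_one, ih.2]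
  have hprob' : ∀ h, (∀ s, 0 ≤ μ' h s) ∧ (∑ s, μ' h s = 1) := by
    intro h
    induction h with
    | zero => rw [hμ'0]; exact ⟨hμ₀0, hμ₀1⟩
    | succ h ih =>
      rw [hμ's]
      refine hΓprob _ (fun p => ?_) ?_
      · rw [hL']; exact mul_nonneg (ih.1 _) (hπ'0 _ _ _)
      · simp only [hL', Fintype.sum_prod_type, ← Finset.mul_sum, hπ'1, mul_one, ih.2]
  have hdec : ∀ h, ∑ p, |L h p - L' h p| ≤ d h + ∑ s, |μ h s - μ' h s| := by
    intro h
    have h1 : ∑ p, |L h p - L' h p|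
        = ∑ s, ∑ a, |μ h s * π h s a - μ' h s * π' h s a| := by
      simp [hL, hL', Fintype.sum_prod_type]
    rw [h1]
    have h2 : ∀ s, ∑ a, |μ h s * π h s a - μ' h s * π' h s a|
        ≤ μ h s * d h + |μ h s - μ' h s| := by
      intro s
      have hterm : ∀ a, |μ h s * π h s a - μ' h s * π' h s a|
          ≤ μ h s * |π h s a - π' h s a| + |μ h s - μ' h s| * π' h s a := by
        intro a
        have heq : μ h s * π h s a - μ' h s * π' h s a
            = μ h s * (π h s a - π' h s a) + (μ h s - μ' h s) * π' h s a := by ring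
        rw [heq]
        refine (abs_add_le _ _).trans (le_of_eq ?_)
        rw [abs_mul, abs_mul, abs_of_nonneg ((hprob h).1 s), abs_of_nonneg (hπ'0 h s a)]
      calc ∑ a, |μ h s * π h s a - μ' h s * π' h s a|
          ≤ ∑ a, (μ h s * |π h s a - π' h s a| + |μ h s - μ' h s| * π' h s a) :=
            Finset.sum_le_sum fun a _ => hterm a
        _ = μ h s * (∑ a, |π h s a - π' h s a|) + |μ h s - μ' h s| := by
            rw [Finset.sum_add_distrib, ← Finset.mul_sum, ← Finset.mul_sum, hπ'1, mul_one]
        _ ≤ μ h s * d h + |μ h s - μ' h s| := by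
            refine add_le_add_left (mul_le_mul_of_nonneg_left ?_ ((hprob h).1 s)) _
            exact Finset.le_sup' (fun s => ∑ a, |π h s a - π' h s a|) (Finset.mem_univ s)
    calc ∑ s, ∑ a, |μ h s * π h s a - μ' h s * π' h s a|
        ≤ ∑ s, (μ h s * d h + |μ h s - μ' h s|) := Finset.sum_le_sum fun s _ => h2 s
      _ = d h + ∑ s, |μ h s - μ' h s| := by
          rw [Finset.sum_add_distrib, ← Finset.sum_mul, (hprob h).2, one_mul]
  intro h
  induction h with
  | zero =>
    have := hdec 0
    simp only [hμ0, hμ'0, sub_self, abs_zero, Finset.sum_const_zero, add_zero] at this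
    rw [Finset.sum_range_one, Nat.sub_self, pow_zero, one_mul]
    exact this
  | succ h ih =>
    have hstep : ∑ s, |μ (h + 1) s - μ' (h + 1) s| ≤ β * ∑ p, |L h p - L' h p| := by
      rw [hμs, hμ's]; exact hΓlip _ _
    calc ∑ p, |L (h + 1) p - L' (h + 1) p|
        ≤ d (h + 1) + ∑ s, |μ (h + 1) s - μ' (h + 1) s| := hdec (h + 1)
      _ ≤ d (h + 1) + β * ∑ p, |L h p - L' h p| := add_le_add_right hstep _
      _ ≤ d (h + 1) + β * ∑ h' ∈ Finset.range (h + 1), β ^ (h - h') * d h' :=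
          add_le_add_right (mul_le_mul_of_nonneg_left ih hβ) _
      _ = ∑ h' ∈ Finset.range (h + 1 + 1), β ^ (h + 1 - h') * d h' := by
          rw [Finset.mul_sum]
          conv_rhs => rw [Finset.sum_range_succ]
          rw [Nat.sub_self, pow_zero, one_mul, add_comm]
          congr 1
          refine Finset.sum_congr rfl fun h' hh' => ?_
          have hle : h + 1 - h' = (h - h') + 1 := by
            have := Finset.mem_range.mp hh'; omega
          rw [hle, pow_succ]
          ring
end

section
/- Conditional empirical fluctuation bound: let s¹,...,s^N be (possibly dependent) S-valued random variables and, conditionally on (s¹,...,s^N), let a¹,...,a^N be independent with aⁱ ∼ πⁱ(·|sⁱ) for stochastic kernels πⁱ : S → Δ_A. Let L̂(s,a) = (1/N)Σᵢ 1{sⁱ = s, aⁱ = a}. Then E[‖L̂ − E[L̂ | s¹,...,s^N]‖₁ | s¹,...,s^N] ≤ √(|A||S|/N) almost surely. -/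
open MeasureTheory ProbabilityTheory

/-- Jensen/Cauchy–Schwarz: `E|g| ≤ √(E g²)` on a probability space. -/
lemma abs_integral_le_sqrt_sq {Ω : Type*} [MeasurableSpace Ω] (P : Measure Ω)
    [IsProbabilityMeasure P] {g : Ω → ℝ} (hg : MemLp g 2 P) :
    ∫ ω, |g ω| ∂P ≤ Real.sqrt (∫ ω, (g ω) ^ 2 ∂P) := by
  have h1 : Integrable g P := hg.integrable one_le_two
  have h2 : Integrable (fun ω => (g ω) ^ 2) P := by
    simpa [sq] using hg.integrable_sq
  set m := ∫ ω, |g ω| ∂P with hm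
  have hm0 : 0 ≤ m := integral_nonneg fun ω => abs_nonneg _
  have key : m ^ 2 ≤ ∫ ω, (g ω) ^ 2 ∂P := by
    have h3 : 0 ≤ ∫ ω, (|g ω| - m) ^ 2 ∂P := integral_nonneg fun ω => sq_nonneg _
    have h4 : ∫ ω, (|g ω| - m) ^ 2 ∂P = (∫ ω, (g ω) ^ 2 ∂P) - m ^ 2 := by
      have hpt : ∀ ω, (|g ω| - m) ^ 2 = ((g ω) ^ 2 - 2 * m * |g ω|) + m ^ 2 := by
        intro ω; rw [sub_sq, sq_abs]; ring
      have i1 : Integrable (fun ω => 2 * m * |g ω|) P := (h1.abs).const_mul _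
      have i2 : Integrable (fun ω => (g ω) ^ 2 - 2 * m * |g ω|) P := h2.sub i1
      simp_rw [hpt]
      rw [integral_add i2 (integrable_const _), integral_sub h2 i1, integral_const_mul,
        integral_const]
      simp [← hm]
      ring
    linarith
  calc m = Real.sqrt (m ^ 2) := (Real.sqrt_sq hm0).symm
    _ ≤ _ := Real.sqrt_le_sqrt key

/-- Cauchy–Schwarz for sums of square roots. -/
lemma sum_sqrt_le_sqrt_card_mul {ι : Type*} (s : Finset ι) (v : ι → ℝ)
    (hv : ∀ i ∈ s, 0 ≤ v i) :
    ∑ i ∈ s, Real.sqrt (v i) ≤ Real.sqrt (s.card * ∑ i ∈ s, v i) := by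
  have h1 : (∑ i ∈ s, Real.sqrt (v i)) ^ 2 ≤ s.card * ∑ i ∈ s, Real.sqrt (v i) ^ 2 :=
    sq_sum_le_card_mul_sum_sq
  have h2 : ∑ i ∈ s, Real.sqrt (v i) ^ 2 = ∑ i ∈ s, v i :=
    Finset.sum_congr rfl fun i hi => Real.sq_sqrt (hv i hi)
  have h0 : 0 ≤ ∑ i ∈ s, Real.sqrt (v i) :=
    Finset.sum_nonneg fun i _ => Real.sqrt_nonneg _
  calc ∑ i ∈ s, Real.sqrt (v i) = Real.sqrt ((∑ i ∈ s, Real.sqrt (v i)) ^ 2) :=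
        (Real.sqrt_sq h0).symm
    _ ≤ Real.sqrt (s.card * ∑ i ∈ s, v i) := Real.sqrt_le_sqrt (by rw [h2] at h1; exact h1)

/-- Conditional empirical fluctuation bound (conditioned on a fixed state
profile): if, given states `sv i`, the actions `act i` are independent with
`act i ∼ πⁱ(·| sv i)`, then the expected ℓ¹ deviation of the empirical
state-action distribution from its mean is at most `√(|A||S|/N)`. -/
theorem conditional_empirical_fluctuation
    {Ω S A : Type*} [MeasurableSpace Ω] [Fintype S] [Fintype A]
    [DecidableEq S] [DecidableEq A]
    [MeasurableSpace A] [MeasurableSingletonClass A]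
    (P : Measure Ω) [IsProbabilityMeasure P]
    (N : ℕ) (hN : 0 < N)
    (sv : Fin N → S)
    (π : Fin N → S → A → ℝ)
    (act : Fin N → Ω → A)
    (hmeas : ∀ i, Measurable (act i))
    (hindep : iIndepFun act P)
    (hlaw : ∀ i b, (P {ω | act i ω = b}).toReal = π i (sv i) b) :
    ∫ ω, ∑ s : S, ∑ b : A,
        |(N : ℝ)⁻¹ * (∑ i, if sv i = s ∧ act i ω = b then (1 : ℝ) else 0)
          - ∫ ω', (N : ℝ)⁻¹ *
              (∑ i, if sv i = s ∧ act i ω' = b then (1 : ℝ) else 0) ∂P| ∂P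
      ≤ Real.sqrt (((Fintype.card A : ℝ) * Fintype.card S) / N) := by
  classical
  -- the individual indicator functions
  set f : S → A → Fin N → Ω → ℝ :=
    fun s b i ω => if sv i = s ∧ act i ω = b then (1 : ℝ) else 0 with hf
  -- measurability of f
  have hfmeas : ∀ s b i, Measurable (f s b i) := by
    intro s b i
    have : f s b i = (fun a => if sv i = s ∧ a = b then (1 : ℝ) else 0) ∘ act i := rfl
    rw [this]
    exact (Measurable.of_discrete).comp (hmeas i)
  have hfbound : ∀ s b i ω, ‖f s b i ω‖ ≤ 1 := by
    intro s b i ω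
    simp only [hf, Real.norm_eq_abs]
    split <;> simp
  have hfmem : ∀ s b i, MemLp (f s b i) 2 P :=
    fun s b i => MemLp.of_bound (hfmeas s b i).aestronglyMeasurable 1
      (Filter.Eventually.of_forall (hfbound s b i))
  have hfint : ∀ s b i, Integrable (f s b i) P :=
    fun s b i => (hfmem s b i).integrable one_le_two
  -- probabilities
  set p : S → A → Fin N → ℝ := fun s b i => if sv i = s then π i s b else 0 with hp
  have hppos : ∀ s b i, 0 ≤ p s b i := by
    intro s b i
    simp only [hp]
    split
    · next h => rw [← h, ← hlaw i b]; exact ENNReal.toReal_nonneg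
    · exact le_rfl
  -- integral of each indicator
  have hfintegral : ∀ s b i, ∫ ω, f s b i ω ∂P = p s b i := by
    intro s b i
    by_cases hsv : sv i = s
    · have hms : MeasurableSet {ω | act i ω = b} := hmeas i (measurableSet_singleton b)
      have heq1 : f s b i = Set.indicator {ω | act i ω = b} (1 : Ω → ℝ) := by
        funext ω
        simp [hf, Set.indicator_apply, hsv]
      rw [heq1, integral_indicator_one hms]
      simp only [hp, hsv, if_pos rfl]
      rw [← hsv]
      exact hlaw i b
    · have : f s b i = fun _ => (0 : ℝ) := by
        funext ω; simp [hf, hsv]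
      rw [this]
      simp [hp, hsv]
  -- variance of each indicator
  have hfvar : ∀ s b i, variance (f s b i) P ≤ p s b i := by
    intro s b i
    refine le_trans (variance_le_expectation_sq (hfmeas s b i).aestronglyMeasurable) ?_
    have : (f s b i) ^ 2 = f s b i := by
      funext ω; simp only [Pi.pow_apply, hf]; split <;> norm_num
    rw [this, hfintegral]
  -- pairwise independence
  have hfindep : ∀ s b, Set.Pairwise ↑(Finset.univ : Finset (Fin N))
      fun i j => IndepFun (f s b i) (f s b j) P := by
    intro s b i _ j _ hij
    have h := (hindep.indepFun hij).comp
      (Measurable.of_discrete (f := fun a => if sv i = s ∧ a = b then (1 : ℝ) else 0))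
      (Measurable.of_discrete (f := fun a => if sv j = s ∧ a = b then (1 : ℝ) else 0))
    exact h
  -- the empirical measures
  set X : S → A → Ω → ℝ := fun s b ω => (N : ℝ)⁻¹ * ∑ i, f s b i ω with hXdef
  have hXmem : ∀ s b, MemLp (X s b) 2 P := by
    intro s b
    have h := (memLp_finset_sum' Finset.univ (fun i _ => hfmem s b i)).const_mul ((N : ℝ)⁻¹)
    have heq : X s b = fun ω => (N : ℝ)⁻¹ * (∑ i, f s b i) ω := by
      funext ω; simp [hXdef, Finset.sum_apply]
    rw [heq]; exact h
  have hXint : ∀ s b, Integrable (X s b) P := fun s b => (hXmem s b).integrable one_le_two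
  -- variance bound for X
  have hXvar : ∀ s b, variance (X s b) P ≤ (N : ℝ)⁻¹ ^ 2 * ∑ i, p s b i := by
    intro s b
    have h1 : variance (X s b) P
        = (N : ℝ)⁻¹ ^ 2 * variance (fun ω => ∑ i, f s b i ω) P := by
      rw [← variance_const_mul]
    rw [h1]
    have h2 : variance (fun ω => ∑ i, f s b i ω) P ≤ ∑ i, p s b i := by
      have := IndepFun.variance_sum (μ := P) (X := f s b) (s := Finset.univ)
        (fun i _ => hfmem s b i) (hfindep s b)
      have heq : (fun ω => ∑ i, f s b i ω) = ∑ i, f s b i := by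
        funext ω; simp
      rw [heq, this]
      exact Finset.sum_le_sum fun i _ => hfvar s b i
    have hnn : (0:ℝ) ≤ (N : ℝ)⁻¹ ^ 2 := by positivity
    exact mul_le_mul_of_nonneg_left h2 hnn
  -- L¹ deviation bound for each (s, b)
  have hkey : ∀ s b, ∫ ω, |X s b ω - ∫ ω', X s b ω' ∂P| ∂P
      ≤ (N : ℝ)⁻¹ * Real.sqrt (∑ i, p s b i) := by
    intro s b
    have hgmem : MemLp (fun ω => X s b ω - ∫ ω', X s b ω' ∂P) 2 P := by
      exact (hXmem s b).sub (memLp_const _)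
    have h1 := abs_integral_le_sqrt_sq P hgmem
    have h2 : ∫ ω, (X s b ω - ∫ ω', X s b ω' ∂P) ^ 2 ∂P = variance (X s b) P := by
      rw [variance_eq_integral (hXmem s b).aemeasurable]
    rw [h2] at h1
    refine h1.trans ?_
    have h3 := Real.sqrt_le_sqrt (hXvar s b)
    refine h3.trans ?_
    have h4 : Real.sqrt ((N : ℝ)⁻¹ ^ 2 * ∑ i, p s b i)
        = (N : ℝ)⁻¹ * Real.sqrt (∑ i, p s b i) := by
      rw [Real.sqrt_mul (sq_nonneg _), Real.sqrt_sq (by positivity : (0:ℝ) ≤ (N : ℝ)⁻¹)]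
    exact le_of_eq h4
  -- swap integral and sums
  have hswap : ∫ ω, ∑ s : S, ∑ b : A, |X s b ω - ∫ ω', X s b ω' ∂P| ∂P
      = ∑ s : S, ∑ b : A, ∫ ω, |X s b ω - ∫ ω', X s b ω' ∂P| ∂P := by
    rw [integral_finset_sum]
    · exact Finset.sum_congr rfl fun s _ => integral_finset_sum _
        (fun b _ => ((hXint s b).sub (integrable_const _)).abs)
    · intro s _
      exact integrable_finset_sum _ fun b _ => ((hXint s b).sub (integrable_const _)).abs
  -- sum of p over b
  have hsum_b : ∀ s (i : Fin N), ∑ b : A, p s b i = if sv i = s then 1 else 0 := by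
    intro s i
    by_cases hsv : sv i = s
    · simp only [hp, hsv, if_true]
      have hcover : ∑ b : A, P {ω | act i ω = b} = P Set.univ := by
        rw [← measure_biUnion_finset]
        · congr 1
          ext ω; simp
        · intro b _ b' _ hbb'
          simp only [Function.onFun, Set.disjoint_left]
          intro ω hω hω'
          exact hbb' (hω.symm.trans hω')
        · exact fun b _ => hmeas i (measurableSet_singleton b)
      have : ∑ b : A, π i s b = 1 := by
        have h3 : ∀ b, π i s b = (P {ω | act i ω = b}).toReal := by
          intro b; rw [← hsv]; exact (hlaw i b).symm
        simp_rw [h3]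
        rw [← ENNReal.toReal_sum (fun b _ => measure_ne_top P _), hcover]
        simp
      exact this
    · simp [hp, hsv]
  -- sum over i of the state indicator
  have hsum_s : ∑ s : S, ∑ i : Fin N, (if sv i = s then (1:ℝ) else 0) = N := by
    rw [Finset.sum_comm]
    have : ∀ i : Fin N, ∑ s : S, (if sv i = s then (1:ℝ) else 0) = 1 := by
      intro i; simp
    simp_rw [this]
    simp
  -- put everything together
  show ∫ ω, ∑ s : S, ∑ b : A, |X s b ω - ∫ ω', X s b ω' ∂P| ∂P ≤ _
  rw [hswap]
  have step1 : ∀ s : S, ∑ b : A, ∫ ω, |X s b ω - ∫ ω', X s b ω' ∂P| ∂P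
      ≤ (N : ℝ)⁻¹ * Real.sqrt ((Fintype.card A : ℝ) * ∑ i : Fin N, (if sv i = s then (1:ℝ) else 0)) := by
    intro s
    calc ∑ b : A, ∫ ω, |X s b ω - ∫ ω', X s b ω' ∂P| ∂P
        ≤ ∑ b : A, (N : ℝ)⁻¹ * Real.sqrt (∑ i, p s b i) :=
          Finset.sum_le_sum fun b _ => hkey s b
      _ = (N : ℝ)⁻¹ * ∑ b : A, Real.sqrt (∑ i, p s b i) := by
          rw [Finset.mul_sum]
      _ ≤ (N : ℝ)⁻¹ * Real.sqrt ((Fintype.card A : ℝ) * ∑ b : A, ∑ i, p s b i) := by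
          refine mul_le_mul_of_nonneg_left ?_ (by positivity)
          have := sum_sqrt_le_sqrt_card_mul Finset.univ (fun b => ∑ i, p s b i)
            (fun b _ => Finset.sum_nonneg fun i _ => hppos s b i)
          simpa using this
      _ = (N : ℝ)⁻¹ * Real.sqrt ((Fintype.card A : ℝ) * ∑ i : Fin N, (if sv i = s then (1:ℝ) else 0)) := by
          rw [Finset.sum_comm]
          simp_rw [hsum_b]
  calc ∑ s : S, ∑ b : A, ∫ ω, |X s b ω - ∫ ω', X s b ω' ∂P| ∂P
      ≤ ∑ s : S, (N : ℝ)⁻¹ * Real.sqrt ((Fintype.card A : ℝ) * ∑ i : Fin N, (if sv i = s then (1:ℝ) else 0)) :=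
        Finset.sum_le_sum fun s _ => step1 s
    _ = (N : ℝ)⁻¹ * Real.sqrt (Fintype.card A) *
        ∑ s : S, Real.sqrt (∑ i : Fin N, (if sv i = s then (1:ℝ) else 0)) := by
        rw [Finset.mul_sum]
        refine Finset.sum_congr rfl fun s _ => ?_
        rw [Real.sqrt_mul (by positivity)]
        ring
    _ ≤ (N : ℝ)⁻¹ * Real.sqrt (Fintype.card A) *
        Real.sqrt ((Fintype.card S : ℝ) * ∑ s : S, ∑ i : Fin N, (if sv i = s then (1:ℝ) else 0)) := by
        refine mul_le_mul_of_nonneg_left ?_ (by positivity)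
        have := sum_sqrt_le_sqrt_card_mul Finset.univ
          (fun s : S => ∑ i : Fin N, (if sv i = s then (1:ℝ) else 0))
          (fun s _ => Finset.sum_nonneg fun i _ => by split <;> norm_num)
        simpa using this
    _ = Real.sqrt (((Fintype.card A : ℝ) * Fintype.card S) / N) := by
        have hNpos : (0:ℝ) < (N:ℝ) := by exact_mod_cast hN
        rw [hsum_s, mul_assoc, ← Real.sqrt_mul (by positivity),
          show ((Fintype.card A : ℝ) * Fintype.card S) / N
              = ((Fintype.card A : ℝ) * ((Fintype.card S : ℝ) * N)) * ((N:ℝ)⁻¹) ^ 2 from by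
            field_simp]
        rw [Real.sqrt_mul (by positivity : (0:ℝ) ≤ (Fintype.card A : ℝ) * ((Fintype.card S : ℝ) * N)),
          Real.sqrt_sq (by positivity : (0:ℝ) ≤ ((N:ℝ))⁻¹)]
        ring
end
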